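/- The function g(x) = N(x/2) + ((√(16+25x²) - 5x)/(4√(2π)))·e^{-x²/8} is strictly increasing on [1, ∞). -/

import Mathlib

open Real MeasureTheory

/-- The standard normal cumulative distribution function. -/
noncomputable def stdNormalCDF (x : ℝ) : ℝ :=
  (Real.sqrt (2 * Real.pi))⁻¹ * ∫ v in Set.Iic x, Real.exp (-v ^ 2 / 2)

lemma gauss_integrable : Integrable (fun v : ℝ => Real.exp (-v ^ 2 / 2)) := by
  have := integrable_exp_neg_mul_sq (b := 1/2) (by norm_num)
  convert this using 2 with v
  ring_nf

lemma cdf_hasDeriv (y : ℝ) :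
    HasDerivAt stdNormalCDF ((Real.sqrt (2 * Real.pi))⁻¹ * Real.exp (-y ^ 2 / 2)) y := by
  have hint : ∀ z : ℝ, stdNormalCDF z =
      (Real.sqrt (2 * Real.pi))⁻¹ * ((∫ v in Set.Iic (0:ℝ), Real.exp (-v ^ 2 / 2)) +
        ∫ v in (0:ℝ)..z, Real.exp (-v ^ 2 / 2)) := by
    intro z
    unfold stdNormalCDF
    rw [← intervalIntegral.integral_Iic_sub_Iic gauss_integrable.integrableOn
      gauss_integrable.integrableOn]
    ring
  have hd : HasDerivAt (fun z => ∫ v in (0:ℝ)..z, Real.exp (-v ^ 2 / 2))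
      (Real.exp (-y ^ 2 / 2)) y := by
    apply intervalIntegral.integral_hasDerivAt_right
      (gauss_integrable.intervalIntegrable)
      (Continuous.aestronglyMeasurable (by continuity)).stronglyMeasurableAtFilter
    exact Continuous.continuousAt (by continuity)
  have := (hd.const_add (∫ v in Set.Iic (0:ℝ), Real.exp (-v ^ 2 / 2))).const_mul
      (Real.sqrt (2 * Real.pi))⁻¹
  refine HasDerivAt.congr_deriv (this.congr_of_eventuallyEq ?_) (by ring)
  filter_upwards with z using hint z

lemma g_hasDeriv (x : ℝ) :
    HasDerivAt
      (fun x : ℝ => stdNormalCDF (x / 2) +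
        (Real.sqrt (16 + 25 * x ^ 2) - 5 * x) / (4 * Real.sqrt (2 * Real.pi))
          * Real.exp (-x ^ 2 / 8))
      ((Real.sqrt (2 * Real.pi))⁻¹ * Real.exp (-(x/2) ^ 2 / 2) * (2:ℝ)⁻¹ +
        ((1 / (2 * Real.sqrt (16 + 25 * x ^ 2)) * (25 * (2 * x)) - 5) /
            (4 * Real.sqrt (2 * Real.pi)) * Real.exp (-x ^ 2 / 8) +
          (Real.sqrt (16 + 25 * x ^ 2) - 5 * x) / (4 * Real.sqrt (2 * Real.pi)) *
            (Real.exp (-x ^ 2 / 8) * (-(2 * x) / 8)))) x := by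
  have h1 : HasDerivAt (fun x : ℝ => stdNormalCDF (x / 2))
      ((Real.sqrt (2 * Real.pi))⁻¹ * Real.exp (-(x/2) ^ 2 / 2) * (2:ℝ)⁻¹) x := by
    have := (cdf_hasDeriv (x / 2)).comp x ((hasDerivAt_id x).div_const 2)
    simpa [Function.comp_def] using this
  have hin : HasDerivAt (fun x : ℝ => 16 + 25 * x ^ 2) (25 * (2 * x)) x := by
    simpa using ((hasDerivAt_pow 2 x).const_mul 25).const_add 16
  have hpos : (0:ℝ) < 16 + 25 * x ^ 2 := by positivity
  have hs : HasDerivAt (fun x : ℝ => Real.sqrt (16 + 25 * x ^ 2))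
      (1 / (2 * Real.sqrt (16 + 25 * x ^ 2)) * (25 * (2 * x))) x :=
    (Real.hasDerivAt_sqrt hpos.ne').comp x hin
  have hnum : HasDerivAt (fun x : ℝ => (Real.sqrt (16 + 25 * x ^ 2) - 5 * x) /
      (4 * Real.sqrt (2 * Real.pi)))
      ((1 / (2 * Real.sqrt (16 + 25 * x ^ 2)) * (25 * (2 * x)) - 5) /
        (4 * Real.sqrt (2 * Real.pi))) x := by
    exact (hs.sub (by simpa using (hasDerivAt_id x).const_mul 5)).div_const _
  have hexp : HasDerivAt (fun x : ℝ => Real.exp (-x ^ 2 / 8))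
      (Real.exp (-x ^ 2 / 8) * (-(2 * x) / 8)) x := by
    have hi : HasDerivAt (fun x : ℝ => -x ^ 2 / 8) (-(2 * x) / 8) x := by
      simpa using ((hasDerivAt_pow 2 x).neg).div_const 8
    simpa [mul_comm] using hi.exp
  exact h1.add (hnum.mul hexp)

theorem stmt_2 :
    StrictMonoOn
      (fun x : ℝ => stdNormalCDF (x / 2) +
        (Real.sqrt (16 + 25 * x ^ 2) - 5 * x) / (4 * Real.sqrt (2 * Real.pi))
          * Real.exp (-x ^ 2 / 8))
      (Set.Ici (1 : ℝ)) := by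
  apply strictMonoOn_of_deriv_pos (convex_Ici 1)
  · exact fun x _ => ((g_hasDeriv x).differentiableAt.continuousAt).continuousWithinAt
  · intro x hx
    rw [interior_Ici] at hx
    rw [(g_hasDeriv x).deriv]
    have hx1 : (1:ℝ) ≤ x := le_of_lt hx
    set s := Real.sqrt (16 + 25 * x ^ 2) with hs_def
    have hs0 : 0 < s := Real.sqrt_pos.mpr (by positivity)
    have hs2 : s ^ 2 = 16 + 25 * x ^ 2 := Real.sq_sqrt (by positivity)
    have hc : 0 < Real.sqrt (2 * Real.pi) := Real.sqrt_pos.mpr (by positivity)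
    have he : 0 < Real.exp (-x ^ 2 / 8) := Real.exp_pos _
    have hee : Real.exp (-(x/2) ^ 2 / 2) = Real.exp (-x ^ 2 / 8) := by ring_nf
    rw [hee]
    have hx0 : 0 < x := by linarith
    have hT : 0 < 84*x - 25*x^3 + s*(5*x^2-12) := by
      have h5 : 0 < s + 5*x := by linarith
      have hkey : 0 < 24*x*s + 200*x^2 - 192 := by nlinarith [mul_pos hx0 hs0]
      have hprod : (84*x - 25*x^3 + s*(5*x^2-12)) * (s + 5*x)
          = 24*x*s + 200*x^2 - 192 := by linear_combination (5*x^2 - 12) * hs2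
      nlinarith [mul_pos hkey h5]
    -- D = e/c * (1/2 + (25x/s - 5)/4 - (s-5x)x/16), and 16 s * (...) = T
    have key : (Real.sqrt (2 * Real.pi))⁻¹ * Real.exp (-x ^ 2 / 8) * (2:ℝ)⁻¹ +
        ((1 / (2 * s) * (25 * (2 * x)) - 5) / (4 * Real.sqrt (2 * Real.pi)) *
            Real.exp (-x ^ 2 / 8) +
          (s - 5 * x) / (4 * Real.sqrt (2 * Real.pi)) *
            (Real.exp (-x ^ 2 / 8) * (-(2 * x) / 8)))
        = Real.exp (-x ^ 2 / 8) / Real.sqrt (2 * Real.pi) *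
            ((84*x - 25*x^3 + s*(5*x^2-12)) / (16 * s)) := by
      field_simp
      linear_combination (-64 * x) * hs2
    rw [key]
    positivity
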